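/- arXiv:0907.4631 — 2 statements merged into one kernel-verified Lean document; each statement's English description precedes it below -/
import Mathlib

section
/- Let A be an n×n matrix, p ≥ 1, and b_0, …, b_p ∈ ℝⁿ. The function u(t) = φ_0(tA) b_0 + t φ_1(tA) b_1 + t² φ_2(tA) b_2 + ⋯ + t^p φ_p(tA) b_p solves the initial value problem u'(t) = A u(t) + b_1 + t b_2 + ⋯ + (t^{p−1}/(p−1)!) b_p with u(0) = b_0. -/
/-!
For `ℓ ≥ 1` the substitution `s = tθ` turns `t^ℓ φ_ℓ(tA)` into the Duhamel integral
`∫₀ᵗ exp((t - s)A) s^(ℓ-1)/(ℓ-1)! ds`, the solution of `y' = Ay + t^(ℓ-1)/(ℓ-1)!` with `y(0) = 0`,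
while `exp(tA) b₀` solves `y' = Ay` with `y(0) = b₀`; the claim follows by linearity.
Writing the Duhamel integral as `exp(tA) ∫₀ᵗ exp(-sA) f(s) ds` reduces its derivative to the
product rule and the fundamental theorem of calculus.
-/

open scoped Nat
open NormedSpace

/-- Matrix `φ`-functions: `φ_0(M) = exp(M)` and, for `ℓ ≥ 1`,
`φ_ℓ(M) = (1/(ℓ-1)!) ∫₀¹ exp((1-θ)M) θ^{ℓ-1} dθ` (defined entrywise). -/
noncomputable def phiM {n : ℕ} (l : ℕ) (M : Matrix (Fin n) (Fin n) ℝ) :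
    Matrix (Fin n) (Fin n) ℝ :=
  if l = 0 then exp M
  else Matrix.of fun i j =>
    (1 / ((l - 1)! : ℝ)) * ∫ θ in (0:ℝ)..1, (exp ((1 - θ) • M)) i j * θ ^ (l - 1)

open MeasureTheory intervalIntegral
open scoped Matrix

section Duhamel

variable {𝔸 : Type*} [NormedRing 𝔸] [NormedAlgebra ℝ 𝔸]

lemma pow_succ_smul_integral_exp (A : 𝔸) (j : ℕ) (t : ℝ) :
    t ^ (j + 1) • ∫ θ in (0 : ℝ)..1, θ ^ j • exp ((1 - θ) • t • A) =
      ∫ s in (0 : ℝ)..t, s ^ j • exp ((t - s) • A) := by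
  have h := smul_integral_comp_mul_left (fun s : ℝ => s ^ j • exp ((t - s) • A)) t (a := 0) (b := 1)
  rw [mul_zero, mul_one] at h
  rw [← h, pow_succ', ← smul_smul, ← intervalIntegral.integral_smul]
  refine congrArg _ (integral_congr fun θ _ => ?_)
  have hsub : t - t * θ = (1 - θ) * t := by ring
  rw [mul_pow, ← smul_smul, smul_smul (1 - θ) t A, hsub]

variable [NormedAlgebra ℚ 𝔸] [CompleteSpace 𝔸]

noncomputable def duhamelIntegral (A : 𝔸) (f : ℝ → 𝔸) (t : ℝ) : 𝔸 :=
  ∫ s in (0 : ℝ)..t, exp ((t - s) • A) * f s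

lemma continuous_exp_smul (A : 𝔸) : Continuous fun s : ℝ => exp (s • A) :=
  exp_continuous.comp (continuous_id.smul continuous_const)

lemma exp_sub_smul (A : 𝔸) (t s : ℝ) : exp ((t - s) • A) = exp (t • A) * exp (-s • A) := by
  rw [sub_eq_add_neg, add_smul, exp_add_of_commute (((Commute.refl A).smul_left _).smul_right _)]

lemma duhamelIntegral_eq_exp_mul (A : 𝔸) {f : ℝ → 𝔸} (hf : Continuous f) (t : ℝ) :
    duhamelIntegral A f t = exp (t • A) * ∫ s in (0 : ℝ)..t, exp (-s • A) * f s := by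
  have hint : IntervalIntegrable (fun s : ℝ => exp (-s • A) * f s) volume 0 t :=
    (((continuous_exp_smul A).comp continuous_neg).mul hf).intervalIntegrable _ _
  have h := (ContinuousLinearMap.mul ℝ 𝔸 (exp (t • A))).intervalIntegral_comp_comm hint
  simp only [ContinuousLinearMap.mul_apply', ← mul_assoc, ← exp_sub_smul] at h
  exact h

theorem hasDerivAt_duhamelIntegral (A : 𝔸) {f : ℝ → 𝔸} (hf : Continuous f) (t : ℝ) :
    HasDerivAt (duhamelIntegral A f) (A * duhamelIntegral A f t + f t) t := by
  have hcont : Continuous fun s : ℝ => exp (-s • A) * f s :=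
    ((continuous_exp_smul A).comp continuous_neg).mul hf
  have hinv : exp (t • A) * exp (-t • A) = 1 := by simpa using (exp_sub_smul A t t).symm
  rw [show duhamelIntegral A f = _ from funext (duhamelIntegral_eq_exp_mul A hf)]
  refine ((hasDerivAt_exp_smul_const' A t).mul
    (hcont.integral_hasStrictDerivAt 0 t).hasDerivAt).congr_deriv ?_
  rw [← mul_assoc (exp (t • A)), hinv, one_mul, mul_assoc]

end Duhamel

namespace Matrix

variable {ι : Type*} [Fintype ι] [DecidableEq ι]

/-- The `L∞` operator norm on square real matrices, with its uniformity replaced by the product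
uniformity that `Matrix` already carries. Without the replacement the two topologies agree only
after unfolding past instance transparency, and e.g. `IntervalIntegrable` fails to elaborate. -/
noncomputable abbrev linftyOpNormedRing' : NormedRing (Matrix ι ι ℝ) :=
  { Matrix.linftyOpNormedRing with
    toPseudoMetricSpace := Matrix.linftyOpNormedRing.toPseudoMetricSpace.replaceUniformity
      (U := (inferInstance : UniformSpace (Matrix ι ι ℝ))) rfl }

noncomputable abbrev linftyOpNormedAlgebra' {R : Type*} [NormedField R] [NormedAlgebra R ℝ] :
    @NormedAlgebra R (Matrix ι ι ℝ) _ linftyOpNormedRing'.toSeminormedRing :=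
  letI : NormedRing (Matrix ι ι ℝ) := linftyOpNormedRing'
  { Matrix.instAlgebra with
    norm_smul_le := (Matrix.linftyOpNormedAlgebra (R := R) (α := ℝ) (n := ι)).norm_smul_le }

end Matrix

attribute [local instance] Matrix.linftyOpNormedRing' Matrix.linftyOpNormedAlgebra'

section MatrixCalculus

variable {ι : Type*} [Fintype ι] [DecidableEq ι]

lemma Matrix.intervalIntegral_apply {F : ℝ → Matrix ι ι ℝ} {a b : ℝ}
    (hF : IntervalIntegrable F volume a b) (i j : ι) :
    (∫ x in a..b, F x) i j = ∫ x in a..b, F x i j :=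
  ((LinearMap.toContinuousLinearMap (Matrix.entryLinearMap ℝ ℝ i j)).intervalIntegral_comp_comm
    hF).symm

lemma HasDerivAt.matrix_mulVec {F : ℝ → Matrix ι ι ℝ} {F' : Matrix ι ι ℝ} {t : ℝ}
    (hF : HasDerivAt F F' t) (v : ι → ℝ) : HasDerivAt (fun t => F t *ᵥ v) (F' *ᵥ v) t := by
  exact (LinearMap.toContinuousLinearMap ((Matrix.mulVecBilin ℝ ℝ).flip v)).hasFDerivAt
    |>.comp_hasDerivAt t hF

end MatrixCalculus

section Phi

variable {n : ℕ}

lemma phiM_zero (M : Matrix (Fin n) (Fin n) ℝ) : phiM 0 M = exp M :=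
  if_pos rfl

lemma phiM_succ (l : ℕ) (M : Matrix (Fin n) (Fin n) ℝ) :
    phiM (l + 1) M = (l ! : ℝ)⁻¹ • ∫ θ in (0 : ℝ)..1, θ ^ l • exp ((1 - θ) • M) := by
  ext i j
  have hint : IntervalIntegrable (fun θ : ℝ => θ ^ l • exp ((1 - θ) • M)) volume 0 1 :=
    ((continuous_pow l).smul ((continuous_exp_smul M).comp
      (continuous_const.sub continuous_id))).intervalIntegrable _ _
  rw [Matrix.smul_apply, Matrix.intervalIntegral_apply hint]
  simp [phiM, mul_comm]

lemma pow_succ_smul_phiM_succ (A : Matrix (Fin n) (Fin n) ℝ) (j : ℕ) (t : ℝ) :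
    t ^ (j + 1) • phiM (j + 1) (t • A) = duhamelIntegral A (fun s => (s ^ j / j !) • 1) t := by
  rw [phiM_succ, smul_comm, pow_succ_smul_integral_exp, duhamelIntegral,
    ← intervalIntegral.integral_smul]
  refine integral_congr fun s _ => ?_
  rw [mul_smul_one, smul_smul, div_eq_inv_mul]

end Phi

theorem phi_solves_ivp_general {n : ℕ} (A : Matrix (Fin n) (Fin n) ℝ) (p : ℕ)
    (b : ℕ → Fin n → ℝ) (u : ℝ → Fin n → ℝ)
    (hu : u = fun t => (phiM 0 (t • A)).mulVec (b 0) +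
      ∑ j ∈ Finset.range p, t ^ (j + 1) • (phiM (j + 1) (t • A)).mulVec (b (j + 1))) :
    u 0 = b 0 ∧ ∀ t : ℝ,
      HasDerivAt u (A.mulVec (u t) + ∑ j ∈ Finset.range p, (t ^ j / j !) • b (j + 1)) t := by
  set W : ℕ → ℝ → Matrix (Fin n) (Fin n) ℝ :=
    fun j => duhamelIntegral A fun s => (s ^ j / j !) • 1 with hW_def
  have hu' : u = fun t => exp (t • A) *ᵥ b 0 + ∑ j ∈ Finset.range p, W j t *ᵥ b (j + 1) := by
    simp only [hu, hW_def, phiM_zero, ← Matrix.smul_mulVec, pow_succ_smul_phiM_succ]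
  have hW (j : ℕ) (t : ℝ) : HasDerivAt (W j) (A * W j t + (t ^ j / j !) • 1) t :=
    hasDerivAt_duhamelIntegral A (((continuous_pow j).div_const _).smul continuous_const) t
  refine ⟨by simp [hu', hW_def, duhamelIntegral], fun t => ?_⟩
  have hderiv := ((hasDerivAt_exp_smul_const' A t).matrix_mulVec (b 0)).add
    (HasDerivAt.fun_sum (u := Finset.range p) fun j _ => (hW j t).matrix_mulVec (b (j + 1)))
  rw [hu']
  refine hderiv.congr_deriv ?_
  simp only [Matrix.add_mulVec, ← Matrix.mulVec_mulVec, Matrix.smul_mulVec, Matrix.one_mulVec,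
    Matrix.mulVec_add, Matrix.mulVec_sum, Finset.sum_add_distrib]
  abel

theorem phi_solves_ivp {n : ℕ} (A : Matrix (Fin n) (Fin n) ℝ) (p : ℕ) (hp : 1 ≤ p)
    (b : ℕ → Fin n → ℝ) (u : ℝ → Fin n → ℝ)
    (hu : u = fun t => (phiM 0 (t • A)).mulVec (b 0) +
      ∑ j ∈ Finset.range p, t ^ (j + 1) • (phiM (j + 1) (t • A)).mulVec (b (j + 1))) :
    u 0 = b 0 ∧ ∀ t : ℝ,
      HasDerivAt u (A.mulVec (u t) + ∑ j ∈ Finset.range p, (t ^ j / j !) • b (j + 1)) t :=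
  phi_solves_ivp_general A p b u hu
end

section
/- Let H be an m×m matrix and p ≥ 1. Define the (m+p)×(m+p) block matrix Ĥ = [[H, e₁, 0], [0, 0, I_{p−1}], [0, 0, 0]], where e₁ ∈ ℝ^m is the first standard basis vector and the bottom-right blocks form a nilpotent shift. Then the top m entries of the last column of exp(Ĥ) equal the vector φ_p(H) e₁. -/
open scoped Nat
open NormedSpace

/-!
On the first `m` coordinates `Ĥ` acts as `H`, while on the remaining standard basis vectors (indexed
from `0`) it is the shift `e_{m+p-1} ↦ ⋯ ↦ e_m ↦ e_0 = e₁`. Hence the top of the last column of `Ĥ^k` vanishes for `k < p` and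
equals `H^(k-p) e₁` for `k ≥ p`, so the exponential series gives `∑ₙ Hⁿ e₁ / (n+p)!`. On the other
side, expanding `exp((1-θ)H)` and integrating termwise against the Beta integral
`∫₀¹ θ^(p-1) (1-θ)ⁿ dθ = (p-1)! n! / (n+p)!` gives `φ_p(H) = ∑ₙ Hⁿ / (n+p)!`.
-/

open Matrix

theorem HasSum.matrix_mulVec {X R m n : Type*} [Fintype n] [Semiring R] [TopologicalSpace R]
    [IsTopologicalSemiring R] {f : X → Matrix m n R} {A : Matrix m n R} (hf : HasSum f A)
    (v : n → R) : HasSum (fun x => f x *ᵥ v) (A *ᵥ v) :=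
  hf.map (mulVec.addMonoidHomLeft v) (continuous_id.matrix_mulVec continuous_const)

theorem integral_pow_mul_one_sub_pow (q n : ℕ) :
    ∫ x in (0:ℝ)..1, x ^ q * (1 - x) ^ n = (q ! * n ! / (q + n + 1)! : ℝ) := by
  have hB := Complex.Gamma_mul_Gamma_eq_betaIntegral (s := q + 1) (t := n + 1)
    (by simp; positivity) (by simp; positivity)
  rw [show (q + 1 + (n + 1) : ℂ) = ((q + n + 1 : ℕ) : ℂ) + 1 by push_cast; ring,
    Complex.Gamma_nat_eq_factorial, Complex.Gamma_nat_eq_factorial,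
    Complex.Gamma_nat_eq_factorial, Complex.betaIntegral] at hB
  simp only [add_sub_cancel_right, Complex.cpow_natCast] at hB
  have hreal : ∫ x in (0:ℝ)..1, (x : ℂ) ^ q * (1 - (x : ℂ)) ^ n =
      ((∫ x in (0:ℝ)..1, x ^ q * (1 - x) ^ n : ℝ) : ℂ) := by
    rw [← intervalIntegral.integral_ofReal]
    push_cast
    rfl
  rw [hreal] at hB
  rw [eq_div_iff (by positivity), mul_comm]
  exact_mod_cast hB.symm

theorem Matrix.hasSum_exp {ι : Type*} [Fintype ι] [DecidableEq ι]
    (A : Matrix ι ι ℝ) : HasSum (fun n => (n ! : ℝ)⁻¹ • A ^ n) (exp A) := by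
  -- `exp` and `HasSum` only see the topology, which the `L∞` operator norm induces.
  let := Matrix.linftyOpNormedRing (n := ι) (α := ℝ)
  let := Matrix.linftyOpNormedAlgebra (n := ι) (R := ℝ) (α := ℝ)
  exact exp_series_hasSum_exp' A

theorem Matrix.hasSum_exp_apply {ι : Type*} [Fintype ι] [DecidableEq ι]
    (A : Matrix ι ι ℝ) (i j : ι) : HasSum (fun n => (n ! : ℝ)⁻¹ * (A ^ n) i j) (exp A i j) :=
  Pi.hasSum.1 (Pi.hasSum.1 (Matrix.hasSum_exp A) i) j

theorem hasSum_integral_exp_one_sub_smul_apply {ι : Type*} [Fintype ι] [DecidableEq ι]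
    (A : Matrix ι ι ℝ) (i j : ι) (q : ℕ) :
    HasSum (fun n => (n ! : ℝ)⁻¹ * (A ^ n) i j * ∫ θ in (0:ℝ)..1, θ ^ q * (1 - θ) ^ n)
      (∫ θ in (0:ℝ)..1, exp ((1 - θ) • A) i j * θ ^ q) := by
  have hA := A.hasSum_exp_apply i j
  simp_rw [← intervalIntegral.integral_const_mul]
  refine intervalIntegral.hasSum_integral_of_dominated_convergence
    (fun n _ => |(n ! : ℝ)⁻¹ * (A ^ n) i j|) (fun n => by fun_prop) (fun n => ?_)
    (.of_forall fun _ _ => summable_abs_iff.2 hA.summable) intervalIntegrable_const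
    (.of_forall fun θ _ => ?_)
  · refine .of_forall fun θ hθ => ?_
    rw [Set.uIoc_of_le zero_le_one] at hθ
    have h1 : |θ ^ q * (1 - θ) ^ n| ≤ 1 := by
      rw [abs_mul, abs_pow, abs_pow, abs_of_pos hθ.1, abs_of_nonneg (by linarith [hθ.2])]
      exact mul_le_one₀ (pow_le_one₀ hθ.1.le hθ.2) (pow_nonneg (by linarith [hθ.2]) _)
        (pow_le_one₀ (by linarith [hθ.2]) (by linarith [hθ.1]))
    rw [Real.norm_eq_abs, abs_mul]
    exact mul_le_of_le_one_right (abs_nonneg _) h1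
  · have := ((1 - θ) • A).hasSum_exp_apply i j |>.mul_right (θ ^ q)
    simpa only [smul_pow, Matrix.smul_apply, smul_eq_mul, mul_assoc, mul_comm, mul_left_comm]
      using this

theorem hasSum_phiM {n l : ℕ} (hl : l ≠ 0) (M : Matrix (Fin n) (Fin n) ℝ) :
    HasSum (fun k => ((k + l)! : ℝ)⁻¹ • M ^ k) (phiM l M) := by
  refine Pi.hasSum.2 fun i => Pi.hasSum.2 fun j => ?_
  have key : ∀ k, 1 / ((l - 1)! : ℝ) * ((k ! : ℝ)⁻¹ * (M ^ k) i j *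
      ∫ θ in (0:ℝ)..1, θ ^ (l - 1) * (1 - θ) ^ k) = ((k + l)! : ℝ)⁻¹ * (M ^ k) i j := by
    intro k
    rw [integral_pow_mul_one_sub_pow, show l - 1 + k + 1 = k + l by omega]
    field_simp
  simpa only [phiM, if_neg hl, Matrix.of_apply, Matrix.smul_apply, smul_eq_mul, key] using
    (hasSum_integral_exp_one_sub_smul_apply M i j (l - 1)).mul_left (1 / ((l - 1)! : ℝ))

section AugmentedMatrix

variable {R : Type*} [Semiring R] {m p : ℕ}

/-- The block matrix `Ĥ = [[H, e₁, 0], [0, 0, I_{p-1}], [0, 0, 0]]`. -/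
def augmentedMatrix (H : Matrix (Fin m) (Fin m) R) (p : ℕ) : Matrix (Fin (m + p)) (Fin (m + p)) R :=
  Matrix.of fun i j =>
    if h1 : (i : ℕ) < m then
      (if h2 : (j : ℕ) < m then H ⟨i, h1⟩ ⟨j, h2⟩
       else if (j : ℕ) = m ∧ (i : ℕ) = 0 then 1 else 0)
    else if (j : ℕ) = (i : ℕ) + 1 then 1 else 0

variable (H : Matrix (Fin m) (Fin m) R)

theorem augmentedMatrix_mulVec_append_zero (u : Fin m → R) :
    augmentedMatrix H p *ᵥ Fin.append u 0 = Fin.append (H *ᵥ u) 0 := by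
  ext i
  simp only [mulVec, dotProduct, Fin.sum_univ_add, Fin.append_left, Fin.append_right,
    Pi.zero_apply, mul_zero, Finset.sum_const_zero, add_zero]
  induction i using Fin.addCases with
  | left i => simp [augmentedMatrix, mulVec, dotProduct]
  | right l =>
    simp only [Fin.append_right, Pi.zero_apply]
    exact Finset.sum_eq_zero fun j _ => by simp [augmentedMatrix]; omega

theorem augmentedMatrix_mulVec_single_of_le {c c' : Fin (m + p)} (hc : (c : ℕ) = c' + 1)
    (hc' : m ≤ c') : augmentedMatrix H p *ᵥ Pi.single c 1 = Pi.single c' 1 := by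
  ext i
  have := i.isLt
  simp only [mulVec_single_one, col_apply, augmentedMatrix, of_apply, Pi.single_apply, Fin.ext_iff]
  split_ifs <;> first | rfl | omega

theorem augmentedMatrix_mulVec_single_of_eq {c : Fin (m + p)} (hc : (c : ℕ) = m) :
    augmentedMatrix H p *ᵥ Pi.single c 1 =
      Fin.append (fun j : Fin m => if (j : ℕ) = 0 then 1 else 0) 0 := by
  ext i
  rw [mulVec_single_one]
  induction i using Fin.addCases with
  | left i => simp [augmentedMatrix, hc]
  | right l => simp [augmentedMatrix, hc]; omega

theorem augmentedMatrix_pow_mulVec_append_zero (u : Fin m → R) (n : ℕ) :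
    augmentedMatrix H p ^ n *ᵥ Fin.append u 0 = Fin.append (H ^ n *ᵥ u) 0 := by
  induction n with
  | zero => simp
  | succ n ih => rw [pow_succ', pow_succ', ← mulVec_mulVec, ← mulVec_mulVec, ih,
      augmentedMatrix_mulVec_append_zero]

theorem augmentedMatrix_pow_mulVec_single_of_le {c c' : Fin (m + p)} {k : ℕ} (hc : (c : ℕ) = c' + k)
    (hc' : m ≤ c') : augmentedMatrix H p ^ k *ᵥ Pi.single c 1 = Pi.single c' 1 := by
  induction k generalizing c with
  | zero => rw [Fin.ext hc, pow_zero, one_mulVec]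
  | succ k ih =>
    rw [pow_succ, ← mulVec_mulVec,
      augmentedMatrix_mulVec_single_of_le H (c' := ⟨c - 1, by omega⟩) (by simp; omega)
        (by simp; omega), ih (by simp; omega)]

theorem augmentedMatrix_pow_add_mulVec_single_last (hp : 0 < p) {c : Fin (m + p)}
    (hc : (c : ℕ) = m + p - 1) (n : ℕ) :
    augmentedMatrix H p ^ (n + p) *ᵥ Pi.single c 1 =
      Fin.append (H ^ n *ᵥ fun j : Fin m => if (j : ℕ) = 0 then 1 else 0) 0 := by
  rw [show n + p = n + 1 + (p - 1) by omega, pow_add, pow_succ, ← mulVec_mulVec, ← mulVec_mulVec,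
    augmentedMatrix_pow_mulVec_single_of_le H (c' := ⟨m, by omega⟩) (by simp; omega) le_rfl,
    augmentedMatrix_mulVec_single_of_eq H rfl, augmentedMatrix_pow_mulVec_append_zero]

theorem augmentedMatrix_pow_mulVec_single_last_castAdd {k : ℕ} (hk : k < p) {c : Fin (m + p)}
    (hc : (c : ℕ) = m + p - 1) (i : Fin m) :
    (augmentedMatrix H p ^ k *ᵥ Pi.single c 1) (Fin.castAdd p i) = 0 := by
  rw [augmentedMatrix_pow_mulVec_single_of_le H (c' := ⟨m + (p - 1 - k), by omega⟩)
    (by simp; omega) (by simp), Pi.single_apply, if_neg (by simp [Fin.ext_iff]; omega)]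

end AugmentedMatrix

theorem hasSum_exp_augmentedMatrix_apply_last {m p : ℕ} (hp : 0 < p)
    (H : Matrix (Fin m) (Fin m) ℝ) {c : Fin (m + p)} (hc : (c : ℕ) = m + p - 1) (i : Fin m) :
    HasSum
      (fun n => ((n + p)! : ℝ)⁻¹ * (H ^ n *ᵥ fun j : Fin m => if (j : ℕ) = 0 then 1 else 0) i)
      (exp (augmentedMatrix H p) (Fin.castAdd p i) c) := by
  have hexp := Pi.hasSum.1 ((augmentedMatrix H p).hasSum_exp.matrix_mulVec (Pi.single c 1))
    (Fin.castAdd p i)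
  rw [(exp (augmentedMatrix H p)).mulVec_single_one c, col_apply] at hexp
  simp only [smul_mulVec, Pi.smul_apply, smul_eq_mul] at hexp
  have hhead : ∑ k ∈ Finset.range p,
      (k ! : ℝ)⁻¹ * (augmentedMatrix H p ^ k *ᵥ Pi.single c 1) (Fin.castAdd p i) = 0 :=
    Finset.sum_eq_zero fun k hk => by
      rw [augmentedMatrix_pow_mulVec_single_last_castAdd H (Finset.mem_range.1 hk) hc, mul_zero]
  rw [← hasSum_nat_add_iff' p, hhead, sub_zero] at hexp
  simpa only [augmentedMatrix_pow_add_mulVec_single_last H hp hc, Fin.append_left] using hexp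

theorem exp_augmented_last_column {m p : ℕ} (hp : 1 ≤ p) (H : Matrix (Fin m) (Fin m) ℝ)
    (Hhat : Matrix (Fin (m + p)) (Fin (m + p)) ℝ)
    (hHhat : ∀ i j : Fin (m + p),
      Hhat i j =
        if h1 : (i : ℕ) < m then
          (if h2 : (j : ℕ) < m then H ⟨i, h1⟩ ⟨j, h2⟩
           else if (j : ℕ) = m ∧ (i : ℕ) = 0 then 1 else 0)
        else if (j : ℕ) = (i : ℕ) + 1 then 1 else 0) :
    ∀ i : Fin m, (exp Hhat) (Fin.castLE (Nat.le_add_right m p) i) ⟨m + p - 1, by omega⟩ =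
      (phiM p H).mulVec (fun j : Fin m => if (j : ℕ) = 0 then 1 else 0) i := by
  intro i
  obtain rfl : Hhat = augmentedMatrix H p := Matrix.ext hHhat
  have hphi := Pi.hasSum.1 ((hasSum_phiM (by omega : p ≠ 0) H).matrix_mulVec
    fun j : Fin m => if (j : ℕ) = 0 then 1 else 0) i
  simp only [smul_mulVec, Pi.smul_apply, smul_eq_mul] at hphi
  exact (hasSum_exp_augmentedMatrix_apply_last hp H rfl i).unique hphi
end
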